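/- arXiv:1712.02499 — 2 statements merged into one kernel-verified Lean document; each statement's English description precedes it below -/
import Mathlib

section
/- Let b > 0, f ∈ ℝ[x] of degree at most n-1, and g ∈ ℝ[x] of degree at most n. Then (x·f) ⊞_b^n g = x·(f ⊞_b^{n-1} Δ_b g) + f ⊞_b^{n-1} Δ*_{b,n} g, where (Δ*_{b,n} g)(x) := n·g(x-b) - (x-b)·(Δ_b g)(x). -/
/-
The difference operator obeys the Leibniz-type rule `Δ_b (x p) = x Δ_b p + p(x - b)`, hence
`Δ_b^{k+1} (x f) = x Δ_b^{k+1} f + (k + 1) (Δ_b^k f)(x - b)`. Accordingly `(x f) ⊞_b^n g` splits into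
`x (f ⊞_b^n g)`, which equals `x (f ⊞_b^{n-1} Δ_b g)` because `Δ_b^n f = 0`, and a sum of shifted
terms. Writing `p(x - b) = p - b Δ_b p` and shifting the summation index, the coefficient of
`Δ_b^k f` in that sum becomes `(k + 1) c_{n-1-k} - k b c_{n-k}` with `c_j = (Δ_b^j g)(0)`, which is
exactly `(Δ_b^{n-1-k} Δ*_{b,n} g)(0)`.
-/

open Polynomial Finset

/-- The backward finite difference operator `(Δ_b f)(x) = (f(x) - f(x-b))/b`. -/
noncomputable def deltab (b : ℝ) (f : Polynomial ℝ) : Polynomial ℝ :=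
  Polynomial.C b⁻¹ * (f - f.comp (Polynomial.X - Polynomial.C b))

/-- The `b`-additive (finite difference) convolution
`p ⊞_b^m r = ∑_{k=0}^m (Δ_b^k p)(x) · (Δ_b^{m-k} r)(0)`. -/
noncomputable def bconv (b : ℝ) (m : ℕ) (p r : Polynomial ℝ) : Polynomial ℝ :=
  ∑ k ∈ range (m + 1),
    (deltab b)^[k] p * Polynomial.C (((deltab b)^[m - k] r).eval 0)

/-- The "polar"-type operator `(Δ*_{b,n} g)(x) = n g(x-b) - (x-b)(Δ_b g)(x)`. -/
noncomputable def deltastar (b : ℝ) (n : ℕ) (g : Polynomial ℝ) : Polynomial ℝ :=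
  Polynomial.C (n : ℝ) * g.comp (Polynomial.X - Polynomial.C b) -
    (Polynomial.X - Polynomial.C b) * deltab b g

namespace Finset

theorem sum_range_succ_mul_sub_mul_eq {R : Type*} [CommRing R] (N : ℕ) (a c : ℕ → R) (t : R)
    (ha : a (N + 1) = 0) :
    ∑ k ∈ range (N + 1), ((k : R) + 1) * (a k - t * a (k + 1)) * c (N - k) =
      ∑ k ∈ range (N + 1), a k * (((k : R) + 1) * c (N - k) - k * t * c (N + 1 - k)) := by
  have hshift : ∑ k ∈ range (N + 1), ((k : R) + 1) * t * a (k + 1) * c (N - k) =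
      ∑ k ∈ range (N + 1), (k : R) * t * a k * c (N + 1 - k) := by
    have h := sum_range_succ' (fun j => (j : R) * t * a j * c (N + 1 - j)) (N + 1)
    rw [sum_range_succ, ha] at h
    simpa [Nat.add_sub_add_right] using h.symm
  calc _ = ∑ k ∈ range (N + 1), ((k : R) + 1) * a k * c (N - k) -
        ∑ k ∈ range (N + 1), ((k : R) + 1) * t * a (k + 1) * c (N - k) := by
          rw [← sum_sub_distrib]; exact sum_congr rfl fun k _ => by ring
    _ = _ := by
          rw [hshift, ← sum_sub_distrib]; exact sum_congr rfl fun k _ => by ring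

end Finset

section deltab

variable (b : ℝ)

theorem deltab_add (p q : ℝ[X]) : deltab b (p + q) = deltab b p + deltab b q := by
  simp only [deltab, add_comp]; ring

theorem deltab_sub (p q : ℝ[X]) : deltab b (p - q) = deltab b p - deltab b q := by
  simp only [deltab, sub_comp]; ring

theorem deltab_C_mul (c : ℝ) (p : ℝ[X]) : deltab b (C c * p) = C c * deltab b p := by
  simp only [deltab, mul_comp, C_comp]; ring

theorem deltab_C (c : ℝ) : deltab b (C c) = 0 := by
  simp [deltab]

theorem deltab_comp_X_sub_C (p : ℝ[X]) :
    deltab b (p.comp (X - C b)) = (deltab b p).comp (X - C b) := by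
  simp [deltab, sub_comp, mul_comp, comp_assoc]

variable {b}

theorem deltab_X_mul (hb : b ≠ 0) (p : ℝ[X]) :
    deltab b (X * p) = X * deltab b p + p.comp (X - C b) := by
  have h : (C b⁻¹ : ℝ[X]) * C b = 1 := by rw [← C_mul, inv_mul_cancel₀ hb, C_1]
  simp only [deltab, mul_comp, X_comp]
  linear_combination p.comp (X - C b) * h

theorem deltab_X_sub_C_mul (hb : b ≠ 0) (p : ℝ[X]) :
    deltab b ((X - C b) * p) = (X - C b) * deltab b p + p.comp (X - C b) := by
  rw [sub_mul, deltab_sub, deltab_X_mul hb, deltab_C_mul]; ring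

theorem comp_X_sub_C_eq_sub_deltab (hb : b ≠ 0) (p : ℝ[X]) :
    p.comp (X - C b) = p - C b * deltab b p := by
  have h : (C b : ℝ[X]) * C b⁻¹ = 1 := by rw [← C_mul, mul_inv_cancel₀ hb, C_1]
  rw [deltab]
  linear_combination (p - p.comp (X - C b)) * h

theorem eval_neg_eq_sub_deltab (hb : b ≠ 0) (p : ℝ[X]) :
    p.eval (-b) = p.eval 0 - b * (deltab b p).eval 0 := by
  simpa using congrArg (eval 0) (comp_X_sub_C_eq_sub_deltab hb p)

theorem iterate_deltab_X_mul (hb : b ≠ 0) (p : ℝ[X]) (k : ℕ) :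
    (deltab b)^[k + 1] (X * p) =
      X * (deltab b)^[k + 1] p + ((k : ℝ[X]) + 1) * ((deltab b)^[k] p).comp (X - C b) := by
  induction k with
  | zero => simpa using deltab_X_mul hb p
  | succ k ih =>
    have hcast : ((k : ℝ[X]) + 1) = C ((k : ℝ) + 1) := by simp
    rw [Function.iterate_succ_apply', ih, deltab_add, deltab_X_mul hb, hcast, deltab_C_mul,
      deltab_comp_X_sub_C, ← Function.iterate_succ_apply' (deltab b) k,
      ← Function.iterate_succ_apply' (deltab b) (k + 1)]
    simp only [Nat.succ_eq_add_one, Nat.cast_add, Nat.cast_one, map_add, map_one, map_natCast]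
    ring

theorem iterate_deltab_deltastar (hb : b ≠ 0) (n : ℕ) (g : ℝ[X]) (m : ℕ) :
    (deltab b)^[m] (deltastar b n g) =
      C ((n : ℝ) - m) * ((deltab b)^[m] g).comp (X - C b) -
        (X - C b) * (deltab b)^[m + 1] g := by
  induction m with
  | zero => simp [deltastar]
  | succ m ih =>
    rw [Function.iterate_succ_apply', ih, deltab_sub, deltab_C_mul, deltab_X_sub_C_mul hb,
      deltab_comp_X_sub_C, ← Function.iterate_succ_apply' (deltab b) m,
      ← Function.iterate_succ_apply' (deltab b) (m + 1)]
    simp only [Nat.succ_eq_add_one, Nat.cast_add, Nat.cast_one, map_add, map_sub, map_one,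
      map_natCast]
    ring

theorem eval_iterate_deltab_deltastar (hb : b ≠ 0) (n : ℕ) (g : ℝ[X]) (m : ℕ) :
    ((deltab b)^[m] (deltastar b n g)).eval 0 =
      ((n : ℝ) - m) * ((deltab b)^[m] g).eval 0 -
        ((n : ℝ) - m - 1) * b * ((deltab b)^[m + 1] g).eval 0 := by
  rw [iterate_deltab_deltastar hb]
  simp only [eval_sub, eval_mul, eval_C, eval_comp, eval_X, zero_sub,
    eval_neg_eq_sub_deltab hb, ← Function.iterate_succ_apply' (deltab b) m]
  ring

variable (b)

theorem natDegree_deltab_le (p : ℝ[X]) : (deltab b p).natDegree ≤ p.natDegree - 1 := by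
  have htaylor : p.comp (X - C b) = taylor (-b) p := by
    rw [taylor_apply, C_neg, sub_eq_add_neg]
  have hdiff : (p - p.comp (X - C b)).natDegree ≤ p.natDegree - 1 := by
    rw [htaylor]
    refine natDegree_le_pred ((natDegree_sub_le_of_le le_rfl (natDegree_taylor p _).le).trans
      (max_self _).le) ?_
    rw [coeff_sub, ← leadingCoeff, ← natDegree_taylor p (-b), ← leadingCoeff,
      leadingCoeff_taylor, sub_self]
  exact (natDegree_C_mul_le _ _).trans hdiff

theorem iterate_deltab_eq_zero_of_natDegree_le {p : ℝ[X]} {k : ℕ} (hp : p.natDegree ≤ k) :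
    (deltab b)^[k + 1] p = 0 := by
  induction k generalizing p with
  | zero => rw [eq_C_of_natDegree_le_zero hp]; exact deltab_C b _
  | succ k ih =>
    rw [Function.iterate_succ_apply]
    exact ih ((natDegree_deltab_le b p).trans (by omega))

end deltab

section bconv

variable {b : ℝ}

theorem bconv_succ (N : ℕ) (f g : ℝ[X]) :
    bconv b (N + 1) f g = bconv b N f (deltab b g) + (deltab b)^[N + 1] f * C (g.eval 0) := by
  rw [bconv, sum_range_succ, Nat.sub_self, Function.iterate_zero_apply, bconv]
  congr 1
  refine sum_congr rfl fun k hk => ?_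
  have hkN : k ≤ N := Nat.lt_succ_iff.mp (mem_range.mp hk)
  rw [← Function.iterate_succ_apply, Nat.succ_eq_add_one, Nat.sub_add_comm hkN]

theorem bconv_X_mul (hb : b ≠ 0) (N : ℕ) (f g : ℝ[X]) :
    bconv b (N + 1) (X * f) g =
      X * bconv b (N + 1) f g +
        ∑ k ∈ range (N + 1), ((k : ℝ[X]) + 1) * ((deltab b)^[k] f).comp (X - C b) *
          C (((deltab b)^[N - k] g).eval 0) := by
  simp only [bconv, sum_range_succ' _ (N + 1), Nat.add_sub_add_right, iterate_deltab_X_mul hb,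
    Function.iterate_zero_apply, mul_add, mul_sum, add_mul, sum_add_distrib, mul_assoc]
  ring

theorem sum_comp_X_sub_C_eq_bconv_deltastar (hb : b ≠ 0) {N : ℕ} {f : ℝ[X]}
    (hf : (deltab b)^[N + 1] f = 0) (g : ℝ[X]) :
    ∑ k ∈ range (N + 1), ((k : ℝ[X]) + 1) * ((deltab b)^[k] f).comp (X - C b) *
        C (((deltab b)^[N - k] g).eval 0) =
      bconv b N f (deltastar b (N + 1) g) := by
  simp only [comp_X_sub_C_eq_sub_deltab hb, ← Function.iterate_succ_apply' (deltab b)]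
  rw [sum_range_succ_mul_sub_mul_eq N (fun k => (deltab b)^[k] f)
    (fun j => C (((deltab b)^[j] g).eval 0)) (C b) hf, bconv]
  refine sum_congr rfl fun k hk => ?_
  have hkN : k ≤ N := Nat.lt_succ_iff.mp (mem_range.mp hk)
  rw [eval_iterate_deltab_deltastar hb, Nat.succ_sub hkN]
  simp only [Nat.succ_eq_add_one, map_sub, map_mul, map_one, map_natCast, Nat.cast_sub hkN]
  push_cast
  ring

end bconv

theorem stmt_7_general (b : ℝ) (hb : 0 < b) (n : ℕ) (hn : 1 ≤ n) (f g : Polynomial ℝ)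
    (hf : f.natDegree ≤ n - 1) :
    bconv b n (Polynomial.X * f) g =
      Polynomial.X * bconv b (n - 1) f (deltab b g) +
        bconv b (n - 1) f (deltastar b n g) := by
  obtain ⟨N, rfl⟩ : ∃ N, n = N + 1 := ⟨n - 1, by omega⟩
  rw [Nat.add_sub_cancel] at hf ⊢
  have hfN : (deltab b)^[N + 1] f = 0 := iterate_deltab_eq_zero_of_natDegree_le b hf
  rw [bconv_X_mul hb.ne', bconv_succ, hfN, zero_mul, add_zero,
    sum_comp_X_sub_C_eq_bconv_deltastar hb.ne' hfN]

/-- Recursive identity: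
`(x f) ⊞_b^n g = x (f ⊞_b^{n-1} Δ_b g) + f ⊞_b^{n-1} Δ*_{b,n} g`. -/
theorem stmt_7 (b : ℝ) (hb : 0 < b) (n : ℕ) (hn : 1 ≤ n) (f g : Polynomial ℝ)
    (hf : f.natDegree ≤ n - 1) (hg : g.natDegree ≤ n) :
    bconv b n (Polynomial.X * f) g =
      Polynomial.X * bconv b (n - 1) f (deltab b g) +
        bconv b (n - 1) f (deltastar b n g) :=
  stmt_7_general b hb n hn f g hf
end

section
/- Let b > 0 and let f ∈ ℝ[x] be a real-rooted polynomial of degree n whose roots λ_1 ≤ ... ≤ λ_n satisfy λ_{i+1} − λ_i ≥ b for all i (f is b-mesh). Then Δ_b f, where (Δ_b f)(x) = (f(x) − f(x−b))/b, is real-rooted of degree n−1, is b-mesh, and its roots interlace those of f: Δ_b f ≪ f. -/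
open Polynomial

/-- `f ≪ g`: the Wronskian condition `f'g - fg' ≤ 0` everywhere on `ℝ`. -/
def interlacesBelow (f g : Polynomial ℝ) : Prop :=
  ∀ x : ℝ, (Polynomial.derivative f).eval x * g.eval x -
    f.eval x * (Polynomial.derivative g).eval x ≤ 0

/-- A real polynomial has all real roots when its root multiset is as large as
its degree. -/
def realRooted (f : Polynomial ℝ) : Prop := Multiset.card f.roots = f.natDegree

/-- `f` is `b`-mesh: all roots are simple and any two distinct roots differ
by at least `b`. -/
def bMesh (b : ℝ) (f : Polynomial ℝ) : Prop :=
  f.roots.Nodup ∧ ∀ x ∈ f.roots, ∀ y ∈ f.roots, x ≠ y → b ≤ |x - y|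

/-!
Write `f = a p` with `p = ∏ (X - d i)`, `d 0 < ⋯ < d (n-1)` and `d i + b ≤ d (i+1)`, and put
`g = p - p(X - b)`. At `x = d k + b` and `y = d (k+1)` we have `g x = p x` and `g y = -p (y - b)`,
and every factor `(x - d j) (y - b - d j)` of `p x * p (y - b)` is nonnegative, so `g` has a root
in `[d k + b, d (k+1)]`. These `n - 1` roots are `b`-separated and `deg g < n`, so they are all
the roots of `g`.

Since `Δ_b f = (a / b) g`, the relation `Δ_b f ≪ f` says `W(g, p) ≥ 0` for the Wronskian
`W(u, v) = u v' - u' v`. Expand `g` by Lagrange interpolation at the nodes `d i`. Since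
`W(p / (X - d i), p) = (p / (X - d i))²`, the Wronskian `W(g, p)` is a combination of squares
with coefficients `g (d i) / ∏_{j ≠ i} (d i - d j) = b ∏_{j ≠ i} (d i - d j - b) / (d i - d j)`,
each factor of which is nonnegative by the mesh condition.
-/

open Finset Lagrange

namespace Polynomial

theorem degree_sub_comp_X_sub_C_lt {R : Type*} [CommRing R] {p : R[X]} (hp : p ≠ 0) (b : R) :
    (p - p.comp (X - C b)).degree < p.degree := by
  have htaylor : p.comp (X - C b) = taylor (-b) p := by
    rw [taylor_apply, C_neg, sub_eq_add_neg]
  rw [htaylor]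
  exact degree_sub_lt_left (degree_taylor p _).symm hp (leadingCoeff_taylor _ _).symm

theorem wronskian_C_mul_left {R : Type*} [CommRing R] (c : R) (p q : R[X]) :
    wronskian (C c * p) q = C c * wronskian p q := by
  simp only [wronskian, derivative_C_mul]
  ring

theorem wronskian_C_mul_right {R : Type*} [CommRing R] (c : R) (p q : R[X]) :
    wronskian p (C c * q) = C c * wronskian p q := by
  simp only [wronskian, derivative_C_mul]
  ring

theorem exists_isRoot_mem_Icc_of_eval_mul_eval_nonpos (p : ℝ[X]) {u v : ℝ} (huv : u ≤ v)
    (h : p.eval u * p.eval v ≤ 0) : ∃ μ ∈ Set.Icc u v, p.IsRoot μ := by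
  have h0 : (0 : ℝ) ∈ Set.uIcc (p.eval u) (p.eval v) := by
    rw [Set.mem_uIcc]
    rcases mul_nonpos_iff.1 h with h | h
    · exact Or.inr ⟨h.2, h.1⟩
    · exact Or.inl h
  obtain ⟨μ, hμ, hroot⟩ := intermediate_value_uIcc p.continuous.continuousOn h0
  exact ⟨μ, Set.uIcc_of_le huv ▸ hμ, hroot⟩

theorem roots_eq_map_of_injective {m : ℕ} {q : ℝ[X]} (hq : q ≠ 0) (hdeg : q.natDegree ≤ m)
    {μ : Fin m → ℝ} (hμ : Function.Injective μ) (hroot : ∀ k, q.IsRoot (μ k)) :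
    q.roots = univ.val.map μ ∧ q.natDegree = m := by
  have hcard : Multiset.card (univ.val.map μ) = m := by simp
  have hle : univ.val.map μ ≤ q.roots :=
    (Multiset.le_iff_subset (univ.nodup.map hμ)).2 fun x hx => by
      obtain ⟨k, -, rfl⟩ := Multiset.mem_map.1 hx
      exact (mem_roots hq).2 (hroot k)
  have hcard_le := (Multiset.card_le_card hle).trans (card_roots' q)
  exact ⟨(Multiset.eq_of_le_of_card_le hle (by linarith [card_roots' q])).symm, by omega⟩

end Polynomial

namespace Lagrange

variable {ι : Type*} [DecidableEq ι] {s : Finset ι} {v : ι → ℝ} {b : ℝ}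

theorem wronskian_nodal_erase_nodal {i : ι} (hi : i ∈ s) :
    wronskian (nodal (s.erase i) v) (nodal s v) = nodal (s.erase i) v ^ 2 := by
  rw [wronskian, nodal_eq_mul_nodal_erase hi, derivative_mul, derivative_X_sub_C]
  ring

theorem wronskian_eq_sum_nodalWeight {g : ℝ[X]} (hvs : Set.InjOn v s) (hg : g.degree < #s) :
    wronskian g (nodal s v) =
      ∑ i ∈ s, C (g.eval (v i) * nodalWeight s v i) * nodal (s.erase i) v ^ 2 := by
  conv_lhs => rw [eq_interpolate hvs hg, interpolate_apply]
  rw [← wronskianBilin_apply, map_sum, LinearMap.sum_apply]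
  refine Finset.sum_congr rfl fun i hi => ?_
  rw [basis_eq_prod_sub_inv_mul_nodal_div hi, ← nodal_erase_eq_nodal_div hi, ← mul_assoc, ← C_mul,
    wronskianBilin_apply, wronskian_C_mul_left, wronskian_nodal_erase_nodal hi]

theorem eval_sub_comp_mul_nodalWeight_nonneg (hb : 0 < b)
    (hv : ∀ i ∈ s, ∀ j ∈ s, i ≠ j → b ≤ |v i - v j|) {i : ι} (hi : i ∈ s) :
    0 ≤ (nodal s v - (nodal s v).comp (X - C b)).eval (v i) * nodalWeight s v i := by
  have heval : (nodal s v - (nodal s v).comp (X - C b)).eval (v i) =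
      b * ∏ j ∈ s.erase i, (v i - b - v j) := by
    rw [eval_sub, eval_nodal_at_node hi, eval_comp, eval_sub, eval_X, eval_C, eval_nodal,
      ← mul_prod_erase s _ hi]
    ring
  rw [heval, nodalWeight, mul_assoc, ← prod_mul_distrib]
  refine mul_nonneg hb.le (prod_nonneg fun j hj => ?_)
  obtain ⟨hji, hj⟩ := mem_erase.1 hj
  rcases le_abs'.1 (hv i hi j hj hji.symm) with hlt | hgt
  · exact mul_nonneg_of_nonpos_of_nonpos (by linarith) (inv_nonpos.2 (by linarith))
  · exact mul_nonneg (by linarith) (inv_nonneg.2 (by linarith))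

theorem eval_wronskian_sub_comp_nodal_nonneg (hb : 0 < b)
    (hv : ∀ i ∈ s, ∀ j ∈ s, i ≠ j → b ≤ |v i - v j|) (x : ℝ) :
    0 ≤ (wronskian (nodal s v - (nodal s v).comp (X - C b)) (nodal s v)).eval x := by
  have hvs : Set.InjOn v s := fun i hi j hj hij => by
    by_contra hne
    have := hv i hi j hj hne
    rw [hij, sub_self, abs_zero] at this
    linarith
  have hdeg := degree_sub_comp_X_sub_C_lt (nodal_ne_zero (s := s) (v := v)) b
  rw [degree_nodal] at hdeg
  rw [wronskian_eq_sum_nodalWeight hvs hdeg, eval_finsetSum]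
  refine sum_nonneg fun i hi => ?_
  rw [eval_mul, eval_C]
  exact mul_nonneg (eval_sub_comp_mul_nodalWeight_nonneg hb hv hi) (by rw [eval_pow]; positivity)

end Lagrange

section MeshNodes

variable {m : ℕ} {b : ℝ} {d : Fin (m + 1) → ℝ}

theorem monotone_of_add_le (hb : 0 < b) (hd : ∀ i j, i < j → d i + b ≤ d j) : Monotone d :=
  fun i j hij => hij.eq_or_lt.elim (fun h => h ▸ le_rfl) fun h => by linarith [hd i j h]

theorem exists_isRoot_sub_comp_nodal_mem_Icc (hb : 0 < b) (hd : ∀ i j, i < j → d i + b ≤ d j)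
    (k : Fin m) : ∃ μ ∈ Set.Icc (d k.castSucc + b) (d k.succ),
      (nodal univ d - (nodal univ d).comp (X - C b)).IsRoot μ := by
  have hmono := monotone_of_add_le hb hd
  have hgap := hd _ _ k.castSucc_lt_succ
  refine exists_isRoot_mem_Icc_of_eval_mul_eval_nonpos _ hgap ?_
  simp only [eval_sub, eval_comp, eval_X, eval_C, add_sub_cancel_right,
    eval_nodal_at_node (mem_univ _)]
  rw [eval_nodal, eval_nodal, sub_zero, zero_sub, mul_neg, neg_nonpos, ← prod_mul_distrib]
  refine prod_nonneg fun j _ => ?_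
  rcases le_or_gt j k.castSucc with hj | hj
  · have := hmono hj
    exact mul_nonneg (by linarith) (by linarith)
  · have := hmono (Fin.castSucc_lt_iff_succ_le.1 hj)
    exact mul_nonneg_of_nonpos_of_nonpos (by linarith) (by linarith)

theorem sub_comp_nodal_ne_zero (hb : 0 < b) (hd : ∀ i j, i < j → d i + b ≤ d j) :
    nodal univ d - (nodal univ d).comp (X - C b) ≠ 0 := by
  intro h
  have h0 := congrArg (eval (d 0)) h
  rw [eval_sub, eval_nodal_at_node (mem_univ 0), eval_comp, eval_sub, eval_X, eval_C, eval_zero,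
    zero_sub, neg_eq_zero] at h0
  refine eval_nodal_not_at_node (fun j _ => ?_) h0
  linarith [monotone_of_add_le hb hd (Fin.zero_le j)]

theorem exists_roots_sub_comp_nodal (hb : 0 < b) (hd : ∀ i j, i < j → d i + b ≤ d j) :
    ∃ μ : Fin m → ℝ, (∀ k l, k < l → μ k + b ≤ μ l) ∧
      (nodal univ d - (nodal univ d).comp (X - C b)).roots = univ.val.map μ ∧
      (nodal univ d - (nodal univ d).comp (X - C b)).natDegree = m := by
  choose μ hμ hroot using exists_isRoot_sub_comp_nodal_mem_Icc hb hd
  have hμ_sep : ∀ k l, k < l → μ k + b ≤ μ l := fun k l hkl =>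
    calc μ k + b ≤ d k.succ + b := by linarith [(hμ k).2]
      _ ≤ d l.castSucc + b := by
        gcongr
        exact monotone_of_add_le hb hd (Fin.succ_le_castSucc_iff.2 hkl)
      _ ≤ μ l := (hμ l).1
  have hinj : Function.Injective μ :=
    StrictMono.injective fun k l hkl => by linarith [hμ_sep k l hkl]
  have hdeg := degree_sub_comp_X_sub_C_lt (nodal_ne_zero (s := univ) (v := d)) b
  rw [degree_nodal, card_univ, Fintype.card_fin] at hdeg
  have hdeg' := natDegree_le_iff_degree_le.2 (Order.le_of_lt_succ hdeg)
  exact ⟨μ, hμ_sep, roots_eq_map_of_injective (sub_comp_nodal_ne_zero hb hd) hdeg' hinj hroot⟩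

end MeshNodes

theorem exists_eq_C_mul_nodal_of_bMesh {b : ℝ} {n : ℕ} {f : ℝ[X]} (hdeg : f.natDegree = n) (hfr : realRooted f)
    (hfm : bMesh b f) :
    ∃ d : Fin n → ℝ, (∀ i j, i < j → d i + b ≤ d j) ∧ f = C f.leadingCoeff * nodal univ d := by
  have hcard : f.roots.toFinset.card = n := by
    rw [Multiset.toFinset_card_of_nodup hfm.1, ← hdeg]
    exact hfr
  set d := f.roots.toFinset.orderEmbOfFin hcard
  have hroots : f.roots = univ.val.map d := by
    rw [← hfm.1.dedup, ← Multiset.toFinset_val, ← Finset.map_orderEmbOfFin_univ _ hcard,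
      Finset.map_val]
    rfl
  refine ⟨d, fun i j hij => ?_, ?_⟩
  · have hmem : ∀ k, d k ∈ f.roots := fun k => hroots ▸ Multiset.mem_map_of_mem _ (mem_univ_val k)
    have hlt : d i < d j := d.strictMono hij
    have := hfm.2 _ (hmem i) _ (hmem j) hlt.ne
    rw [abs_sub_comm, abs_of_pos (sub_pos.2 hlt)] at this
    linarith
  · conv_lhs => rw [← C_leadingCoeff_mul_prod_multiset_X_sub_C hfr]
    rw [hroots, Multiset.map_map, nodal_eq, Finset.prod_eq_multiset_prod]
    rfl

theorem realRooted_of_roots_eq_map {m : ℕ} {q : ℝ[X]} {μ : Fin m → ℝ}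
    (hroots : q.roots = univ.val.map μ) (hdeg : q.natDegree = m) : realRooted q := by
  rw [realRooted, hroots, hdeg, Multiset.card_map, card_val, card_univ, Fintype.card_fin]

theorem bMesh_of_roots_eq_map {m : ℕ} {b : ℝ} {q : ℝ[X]} {μ : Fin m → ℝ} (hb : 0 < b)
    (hμ : ∀ k l, k < l → μ k + b ≤ μ l) (hroots : q.roots = univ.val.map μ) : bMesh b q := by
  have hinj : Function.Injective μ :=
    StrictMono.injective fun k l hkl => by linarith [hμ k l hkl]
  refine ⟨hroots ▸ univ.nodup.map hinj, fun x hx y hy hxy => ?_⟩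
  rw [hroots] at hx hy
  obtain ⟨k, -, rfl⟩ := Multiset.mem_map.1 hx
  obtain ⟨l, -, rfl⟩ := Multiset.mem_map.1 hy
  rcases lt_or_gt_of_ne (fun h : k = l => hxy (h ▸ rfl)) with hkl | hkl
  · rw [abs_sub_comm, abs_of_nonneg] <;> linarith [hμ k l hkl]
  · rw [abs_of_nonneg] <;> linarith [hμ l k hkl]

theorem interlacesBelow_iff_eval_wronskian_nonneg {f g : ℝ[X]} :
    interlacesBelow f g ↔ ∀ x, 0 ≤ (wronskian f g).eval x := by
  refine forall_congr' fun x => ?_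
  rw [wronskian, eval_sub, eval_mul, eval_mul]
  constructor <;> intro h <;> linarith

/-- `Δ_b` maps real-rooted `b`-mesh polynomials of degree `n` to real-rooted
`b`-mesh polynomials of degree `n-1`, and `Δ_b f ≪ f`. -/
theorem stmt_13 (b : ℝ) (hb : 0 < b) (n : ℕ) (hn : 1 ≤ n) (f : Polynomial ℝ)
    (hdeg : f.natDegree = n) (hfr : realRooted f) (hfm : bMesh b f) :
    (deltab b f).natDegree = n - 1 ∧ realRooted (deltab b f) ∧
      bMesh b (deltab b f) ∧ interlacesBelow (deltab b f) f := by
  obtain ⟨m, rfl⟩ : ∃ m, n = m + 1 := ⟨n - 1, by omega⟩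
  obtain ⟨d, hd, hf⟩ := exists_eq_C_mul_nodal_of_bMesh hdeg hfr hfm
  set a := f.leadingCoeff
  set p := nodal univ d
  have ha : a ≠ 0 := leadingCoeff_ne_zero.2 (ne_zero_of_natDegree_gt (n := 0) (by omega))
  have hc : b⁻¹ * a ≠ 0 := mul_ne_zero (inv_ne_zero hb.ne') ha
  have hΔ : deltab b f = C (b⁻¹ * a) * (p - p.comp (X - C b)) := by
    rw [deltab, hf, mul_comp, C_comp, C_mul]
    ring
  obtain ⟨μ, hμ, hroots, hdegΔ⟩ := exists_roots_sub_comp_nodal hb hd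
  rw [← roots_C_mul _ hc, ← hΔ] at hroots
  rw [← natDegree_C_mul hc, ← hΔ] at hdegΔ
  refine ⟨hdegΔ, realRooted_of_roots_eq_map hroots hdegΔ, bMesh_of_roots_eq_map hb hμ hroots, ?_⟩
  have hsep : ∀ i ∈ univ, ∀ j ∈ univ, i ≠ j → b ≤ |d i - d j| := fun i _ j _ hij => by
    rcases lt_or_gt_of_ne hij with h | h
    · rw [abs_sub_comm, abs_of_nonneg] <;> linarith [hd i j h]
    · rw [abs_of_nonneg] <;> linarith [hd j i h]
  rw [interlacesBelow_iff_eval_wronskian_nonneg, hΔ, hf]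
  intro x
  rw [wronskian_C_mul_left, wronskian_C_mul_right, eval_mul, eval_C, eval_mul, eval_C,
    ← mul_assoc, mul_assoc b⁻¹]
  exact mul_nonneg (mul_nonneg (inv_nonneg.2 hb.le) (mul_self_nonneg a))
    (Lagrange.eval_wronskian_sub_comp_nodal_nonneg hb hsep x)
end
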